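/- arXiv:1608.02203 — 3 statements merged into one kernel-verified Lean document; each statement's English description precedes it below -/
import Mathlib

section
/- Let d_A, d_B, d_E be positive natural numbers and V an isometry from ℂ^{d_A} to ℂ^{d_B} ⊗ ℂ^{d_E}, with associated channel Φ(ρ) = Tr_E(V ρ Vᴴ) and complementary channel Φ̂(ρ) = Tr_B(V ρ Vᴴ). Then for every finite ensemble {π_i, ρ_i}_{i∈Fin m} of states on ℂ^{d_A} with average state ρ̄ = ∑_i π_i ρ_i, the identity χ({π_i, ρ_i}) + I(B:E)_{V ρ̄ Vᴴ} = χ({π_i, Φ(ρ_i)}) + χ({π_i, Φ̂(ρ_i)}) + ∑_i π_i · I(B:E)_{V ρ_i Vᴴ} holds. -/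
open Matrix ComplexOrder

noncomputable section

/-- Von Neumann entropy: sum of `negMulLog` over eigenvalues. -/
def vnEntropy {ι : Type*} [Fintype ι] [DecidableEq ι] (ρ : Matrix ι ι ℂ) : ℝ :=
  if h : ρ.IsHermitian then ∑ i, Real.negMulLog (h.eigenvalues i) else 0

/-- Partial trace over the second (environment) factor. -/
def ptraceE {dB dE : ℕ} (M : Matrix (Fin dB × Fin dE) (Fin dB × Fin dE) ℂ) :
    Matrix (Fin dB) (Fin dB) ℂ :=
  Matrix.of fun b b' => ∑ e, M (b, e) (b', e)

/-- Partial trace over the first factor. -/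
def ptraceB {dB dE : ℕ} (M : Matrix (Fin dB × Fin dE) (Fin dB × Fin dE) ℂ) :
    Matrix (Fin dE) (Fin dE) ℂ :=
  Matrix.of fun e e' => ∑ b, M (b, e) (b, e')

/-- Quantum mutual information I(B:E) of a bipartite state. -/
def qmi {dB dE : ℕ} (ω : Matrix (Fin dB × Fin dE) (Fin dB × Fin dE) ℂ) : ℝ :=
  vnEntropy (ptraceE ω) + vnEntropy (ptraceB ω) - vnEntropy ω

/-- The channel `ρ ↦ Tr_E (V ρ Vᴴ)` associated with a Stinespring isometry `V`. -/
def chanPhi {dA dB dE : ℕ} (V : Matrix (Fin dB × Fin dE) (Fin dA) ℂ)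
    (ρ : Matrix (Fin dA) (Fin dA) ℂ) : Matrix (Fin dB) (Fin dB) ℂ :=
  ptraceE (V * ρ * Vᴴ)

/-- The complementary channel `ρ ↦ Tr_B (V ρ Vᴴ)`. -/
def chanPhiHat {dA dB dE : ℕ} (V : Matrix (Fin dB × Fin dE) (Fin dA) ℂ)
    (ρ : Matrix (Fin dA) (Fin dA) ℂ) : Matrix (Fin dE) (Fin dE) ℂ :=
  ptraceB (V * ρ * Vᴴ)

/-- Holevo χ-quantity of a finite ensemble `{π i, σ i}`. -/
def finChi {d m : ℕ} (π : Fin m → ℝ) (σ : Fin m → Matrix (Fin d) (Fin d) ℂ) : ℝ :=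
  vnEntropy (∑ i, π i • σ i) - ∑ i, π i * vnEntropy (σ i)

end

/-!
Conjugation by an isometry `V` only pads the spectrum with zeros
(`X ^ dA * charpoly (V σ Vᴴ) = X ^ (dB * dE) * charpoly σ`, as for `AB` versus `BA`), so
`H(V σ Vᴴ) = H(σ)` for every Hermitian `σ`. Together with linearity of the partial traces this
rewrites both sides of the identity as the same combination of `H(ρ̄)`, `H(Φ ρ̄)`, `H(Φ̂ ρ̄)` and
the averages of `H(ρ i)`, `H(Φ ρ i)`, `H(Φ̂ ρ i)`.
-/

open Polynomial

section Entropy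

variable {ι κ : Type*} [Fintype ι] [DecidableEq ι] [Fintype κ] [DecidableEq κ]

lemma vnEntropy_eq_sum_roots_charpoly {A : Matrix ι ι ℂ} (hA : A.IsHermitian) :
    vnEntropy A = (A.charpoly.roots.map fun z => Real.negMulLog z.re).sum := by
  rw [vnEntropy, dif_pos hA, hA.roots_charpoly_eq_eigenvalues, Multiset.map_map]
  rfl

lemma charpoly_mul_mul_conjTranspose (V : Matrix ι κ ℂ) (hV : Vᴴ * V = 1)
    (σ : Matrix κ κ ℂ) :
    X ^ Fintype.card κ * (V * σ * Vᴴ).charpoly = X ^ Fintype.card ι * σ.charpoly := by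
  rw [charpoly_mul_comm', ← Matrix.mul_assoc, hV, Matrix.one_mul]

lemma vnEntropy_mul_mul_conjTranspose (V : Matrix ι κ ℂ) (hV : Vᴴ * V = 1)
    {σ : Matrix κ κ ℂ} (hσ : σ.IsHermitian) : vnEntropy (V * σ * Vᴴ) = vnEntropy σ := by
  have hroots := congrArg roots (charpoly_mul_mul_conjTranspose V hV σ)
  rw [roots_mul (mul_ne_zero (pow_ne_zero _ X_ne_zero) (charpoly_monic _).ne_zero),
    roots_mul (mul_ne_zero (pow_ne_zero _ X_ne_zero) (charpoly_monic _).ne_zero),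
    roots_X_pow, roots_X_pow] at hroots
  have hsum := congrArg (fun s : Multiset ℂ => (s.map fun z => Real.negMulLog z.re).sum) hroots
  simp only [Multiset.map_add, Multiset.sum_add, Multiset.map_nsmul, Multiset.sum_nsmul,
    Multiset.map_singleton, Multiset.sum_singleton, Complex.zero_re, Real.negMulLog_zero,
    smul_zero, zero_add] at hsum
  rw [vnEntropy_eq_sum_roots_charpoly (isHermitian_mul_mul_conjTranspose V hσ),
    vnEntropy_eq_sum_roots_charpoly hσ, hsum]

end Entropy

section PartialTrace

variable {dB dE : ℕ} {α R : Type*} [DistribSMul R ℂ]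

lemma ptraceE_sum (s : Finset α) (M : α → Matrix (Fin dB × Fin dE) (Fin dB × Fin dE) ℂ) :
    ptraceE (∑ i ∈ s, M i) = ∑ i ∈ s, ptraceE (M i) := by
  ext b b'
  simp only [ptraceE, of_apply, Matrix.sum_apply]
  exact Finset.sum_comm

lemma ptraceB_sum (s : Finset α) (M : α → Matrix (Fin dB × Fin dE) (Fin dB × Fin dE) ℂ) :
    ptraceB (∑ i ∈ s, M i) = ∑ i ∈ s, ptraceB (M i) := by
  ext e e'
  simp only [ptraceB, of_apply, Matrix.sum_apply]
  exact Finset.sum_comm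

lemma ptraceE_smul (c : R) (M : Matrix (Fin dB × Fin dE) (Fin dB × Fin dE) ℂ) :
    ptraceE (c • M) = c • ptraceE M := by
  ext b b'
  simp [ptraceE, Finset.smul_sum]

lemma ptraceB_smul (c : R) (M : Matrix (Fin dB × Fin dE) (Fin dB × Fin dE) ℂ) :
    ptraceB (c • M) = c • ptraceB M := by
  ext e e'
  simp [ptraceB, Finset.smul_sum]

end PartialTrace

theorem chi_add_qmi_identity_general
    (dA dB dE : ℕ)
    (V : Matrix (Fin dB × Fin dE) (Fin dA) ℂ) (hV : Vᴴ * V = 1)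
    (m : ℕ) (π : Fin m → ℝ)
    (ρ : Fin m → Matrix (Fin dA) (Fin dA) ℂ)
    (hρ : ∀ i, (ρ i).PosSemidef ∧ (ρ i).trace = 1) :
    finChi π ρ + qmi (V * (∑ i, π i • ρ i) * Vᴴ)
      = finChi π (fun i => chanPhi V (ρ i))
        + finChi π (fun i => chanPhiHat V (ρ i))
        + ∑ i, π i * qmi (V * ρ i * Vᴴ) := by
  have hρ_herm i : (ρ i).IsHermitian := (hρ i).1.isHermitian
  have hρbar_herm : (∑ i, π i • ρ i).IsHermitian :=
    isSelfAdjoint_sum _ fun i _ => (hρ_herm i).smul (IsSelfAdjoint.all (π i))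
  have hconj : V * (∑ i, π i • ρ i) * Vᴴ = ∑ i, π i • (V * ρ i * Vᴴ) := by
    simp only [Matrix.mul_sum, Matrix.sum_mul, Matrix.mul_smul, Matrix.smul_mul]
  simp only [finChi, qmi, chanPhi, chanPhiHat,
    vnEntropy_mul_mul_conjTranspose V hV hρbar_herm,
    fun i => vnEntropy_mul_mul_conjTranspose V hV (hρ_herm i)]
  simp only [hconj, ptraceE_sum, ptraceB_sum, ptraceE_smul, ptraceB_smul]
  simp only [mul_add, mul_sub, Finset.sum_add_distrib, Finset.sum_sub_distrib]
  ring

/-- The basic identity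
`χ(μ) + I(B:E)_{V ρ̄ Vᴴ} = χ(Φ(μ)) + χ(Φ̂(μ)) + ∑ i, π i • I(B:E)_{V ρ_i Vᴴ}`
for finite ensembles. -/
theorem chi_add_qmi_identity
    (dA dB dE : ℕ) (hdA : 0 < dA) (hdB : 0 < dB) (hdE : 0 < dE)
    (V : Matrix (Fin dB × Fin dE) (Fin dA) ℂ) (hV : Vᴴ * V = 1)
    (m : ℕ) (π : Fin m → ℝ) (hπ0 : ∀ i, 0 ≤ π i) (hπ1 : ∑ i, π i = 1)
    (ρ : Fin m → Matrix (Fin dA) (Fin dA) ℂ)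
    (hρ : ∀ i, (ρ i).PosSemidef ∧ (ρ i).trace = 1) :
    finChi π ρ + qmi (V * (∑ i, π i • ρ i) * Vᴴ)
      = finChi π (fun i => chanPhi V (ρ i))
        + finChi π (fun i => chanPhiHat V (ρ i))
        + ∑ i, π i * qmi (V * ρ i * Vᴴ) :=
  chi_add_qmi_identity_general dA dB dE V hV m π ρ hρ
end

section
/- Let d_A, d_B, d_E be positive natural numbers and V an isometry from ℂ^{d_A} to ℂ^{d_B} ⊗ ℂ^{d_E}, with associated channel Φ(ρ) = Tr_E(V ρ Vᴴ). Then for every finite ensemble {π_i, ρ_i}_{i∈Fin m} of states on ℂ^{d_A}, the entropic disturbance satisfies χ({π_i, ρ_i}) − χ({π_i, Φ(ρ_i)}) ≤ 2·log d_E. -/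
open Matrix ComplexOrder

/-!
Write `ρ̄ = ∑ πᵢ ρᵢ`. Since `H(V ρ Vᴴ) = H(ρ)` and `Φ(ρ) = Tr_E (V ρ Vᴴ)`, the disturbance equals
`[H(ρ̄) - H(Φ ρ̄)] + ∑ πᵢ [H(Φ ρᵢ) - H(ρᵢ)]`, and each bracket is at most `log d_E`: the first by
subadditivity `H(BE) ≤ H(B) + H(E)` with `H(E) ≤ log d_E`, the second by the Araki–Lieb inequality
`H(B) ≤ H(BE) + H(E)`, obtained from subadditivity applied to a purification. Subadditivity itself
follows by reading the state in a product basis diagonalising `Tr_E`: its diagonal is majorized by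
its spectrum, and each block of the diagonal is compared with the uniform distribution on `E`.
-/

open Finset

lemma Real.sum_negMulLog_le_negMulLog_sum_add {κ : Type*} [Fintype κ] {x : κ → ℝ}
    (hx : ∀ k, 0 ≤ x k) :
    ∑ k, negMulLog (x k) ≤ negMulLog (∑ k, x k) + (∑ k, x k) * log (Fintype.card κ) := by
  rcases isEmpty_or_nonempty κ with hκ | hκ
  · simp
  have hn : (0 : ℝ) < Fintype.card κ := by exact_mod_cast Fintype.card_pos
  have hjensen := concaveOn_negMulLog.le_map_sum (t := univ)
    (w := fun _ => (Fintype.card κ : ℝ)⁻¹) (p := x) (fun _ _ => by positivity)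
    (by simp [hn.ne']) (fun k _ => hx k)
  simp only [smul_eq_mul, ← Finset.mul_sum, negMulLog_mul] at hjensen
  simp only [negMulLog, log_inv] at hjensen
  have := mul_le_mul_of_nonneg_left hjensen hn.le
  field_simp at this
  simp only [negMulLog, neg_mul, Finset.sum_neg_distrib] at this ⊢
  linarith

section Majorization

variable {n : Type*} [Fintype n] [DecidableEq n]

lemma ConcaveOn.sum_le_sum_mulVec_of_mem_doublyStochastic {s : Set ℝ} {f : ℝ → ℝ}
    (hf : ConcaveOn ℝ s f) {c : Matrix n n ℝ} (hc : c ∈ doublyStochastic ℝ n) {p : n → ℝ}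
    (hp : ∀ i, p i ∈ s) : ∑ i, f (p i) ≤ ∑ j, f ((c *ᵥ p) j) :=
  calc ∑ i, f (p i) = ∑ j, ∑ i, c j i * f (p i) := by
        rw [Finset.sum_comm]
        simp [← Finset.sum_mul, sum_col_of_mem_doublyStochastic hc]
    _ ≤ ∑ j, f ((c *ᵥ p) j) := Finset.sum_le_sum fun j _ => by
        simpa [Matrix.mulVec, dotProduct] using
          hf.le_map_sum (fun i _ => nonneg_of_mem_doublyStochastic hc)
            (sum_row_of_mem_doublyStochastic hc j) (fun i _ => hp i)

lemma normSq_mem_doublyStochastic {U : Matrix n n ℂ} (hU : U ∈ Matrix.unitaryGroup n ℂ) :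
    Matrix.of (fun i j => Complex.normSq (U i j)) ∈ doublyStochastic ℝ n := by
  rw [mem_doublyStochastic_iff_sum]
  refine ⟨fun i j => Complex.normSq_nonneg _, fun i => ?_, fun j => ?_⟩
  · have h := congrFun (congrFun (Matrix.mem_unitaryGroup_iff.mp hU) i) i
    simp only [Matrix.mul_apply, Matrix.star_apply, Complex.star_def, Complex.mul_conj,
      Matrix.one_apply_eq] at h
    exact_mod_cast h
  · have h := congrFun (congrFun (Matrix.mem_unitaryGroup_iff'.mp hU) j) j
    simp only [Matrix.mul_apply, Matrix.star_apply, Complex.star_def, mul_comm (starRingEnd ℂ _),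
      Complex.mul_conj, Matrix.one_apply_eq] at h
    exact_mod_cast h

lemma Matrix.IsHermitian.re_apply_self_eq_mulVec_eigenvalues {A : Matrix n n ℂ}
    (hA : A.IsHermitian) (j : n) :
    (A j j).re = (Matrix.of (fun j i => Complex.normSq (hA.eigenvectorUnitary j i)) *ᵥ
      hA.eigenvalues) j := by
  conv_lhs => rw [hA.spectral_theorem]
  simp [Matrix.mul_apply, Matrix.mulVec, dotProduct, Matrix.diagonal_apply, Complex.normSq_apply,
    mul_add, mul_comm, mul_left_comm]

lemma vnEntropy_le_sum_negMulLog_diag {ω : Matrix n n ℂ} (hω : ω.PosSemidef) :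
    vnEntropy ω ≤ ∑ j, Real.negMulLog (ω j j).re := by
  simp only [vnEntropy, dif_pos hω.1, hω.1.re_apply_self_eq_mulVec_eigenvalues]
  exact Real.concaveOn_negMulLog.sum_le_sum_mulVec_of_mem_doublyStochastic
    (normSq_mem_doublyStochastic hω.1.eigenvectorUnitary.2) hω.eigenvalues_nonneg

end Majorization

section SpectralInvariance

variable {m n : Type*} [Fintype m] [DecidableEq m] [Fintype n] [DecidableEq n]

lemma vnEntropy_eq_sum_roots {M : Matrix n n ℂ} (hM : M.IsHermitian) :
    vnEntropy M = (M.charpoly.roots.map fun z => Real.negMulLog z.re).sum := by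
  simp [vnEntropy, hM, hM.roots_charpoly_eq_eigenvalues]

open Polynomial in
/-- `AB` and `BA` share their nonzero eigenvalues, and zero eigenvalues carry no entropy. -/
lemma vnEntropy_mul_comm {A : Matrix m n ℂ} {B : Matrix n m ℂ} (hAB : (A * B).IsHermitian)
    (hBA : (B * A).IsHermitian) : vnEntropy (A * B) = vnEntropy (B * A) := by
  have hroots := congrArg roots (Matrix.charpoly_mul_comm' A B)
  simp only [roots_mul (mul_ne_zero (pow_ne_zero _ X_ne_zero) (Matrix.charpoly_monic _).ne_zero),
    roots_X_pow] at hroots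
  have := congrArg (fun s => (s.map fun z : ℂ => Real.negMulLog z.re).sum) hroots
  simpa [vnEntropy_eq_sum_roots hAB, vnEntropy_eq_sum_roots hBA, Multiset.map_nsmul,
    Multiset.sum_nsmul] using this

lemma vnEntropy_conj_isometry {V : Matrix m n ℂ} (hV : Vᴴ * V = 1) {ρ : Matrix n n ℂ}
    (hρ : ρ.IsHermitian) : vnEntropy (V * ρ * Vᴴ) = vnEntropy ρ := by
  have h := vnEntropy_mul_comm (A := V) (B := ρ * Vᴴ)
    (by simpa [Matrix.mul_assoc] using isHermitian_mul_mul_conjTranspose V hρ)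
    (by simpa [Matrix.mul_assoc, hV] using hρ)
  simpa [Matrix.mul_assoc, hV] using h

end SpectralInvariance

namespace Matrix

variable {ι ι' κ ν R : Type*} [Fintype κ]

def partialTraceRight [AddCommMonoid R] (M : Matrix (ι × κ) (ι × κ) R) : Matrix ι ι R :=
  of fun i j => ∑ k, M (i, k) (j, k)

def reshape (T : Matrix (ι × κ) ν R) : Matrix ι (ν × κ) R :=
  of fun i q => T (i, q.2) q.1

lemma trace_partialTraceRight [Fintype ι] [AddCommMonoid R] (M : Matrix (ι × κ) (ι × κ) R) :
    (partialTraceRight M).trace = M.trace :=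
  (Fintype.sum_prod_type fun q => M q q).symm

lemma partialTraceRight_mul_conjTranspose [Fintype ν] [NonUnitalNonAssocSemiring R] [Star R]
    (T : Matrix (ι × κ) ν R) :
    partialTraceRight (T * Tᴴ) = T.reshape * T.reshapeᴴ := by
  ext i j
  simp only [partialTraceRight, reshape, mul_apply, conjTranspose_apply, of_apply,
    Fintype.sum_prod_type]
  exact Finset.sum_comm

lemma partialTraceRight_conjTranspose_reshape_mul [Fintype ι] [NonUnitalNonAssocSemiring R]
    [Star R] (T : Matrix (ι × κ) ν R) :
    partialTraceRight (T.reshapeᴴ * T.reshape) = Tᴴ * T := by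
  ext r r'
  simp only [partialTraceRight, reshape, mul_apply, conjTranspose_apply, of_apply,
    Fintype.sum_prod_type]
  exact Finset.sum_comm

open Kronecker in
lemma partialTraceRight_kronecker_one_mul_mul [Fintype ι] [DecidableEq κ] [CommSemiring R]
    (A : Matrix ι' ι R) (M : Matrix (ι × κ) (ι × κ) R) (B : Matrix ι ι' R) :
    partialTraceRight ((A ⊗ₖ (1 : Matrix κ κ R)) * M * (B ⊗ₖ (1 : Matrix κ κ R))) =
      A * partialTraceRight M * B := by
  ext i j
  simp only [partialTraceRight, of_apply, mul_apply, kroneckerMap_apply, one_apply, mul_ite,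
    mul_one, mul_zero, ite_mul, zero_mul, Fintype.sum_prod_type, sum_ite_eq, sum_ite_eq', mem_univ,
    if_true, sum_mul, mul_sum, mul_assoc]
  rw [Finset.sum_comm]
  exact Finset.sum_congr rfl fun _ _ => Finset.sum_comm

open scoped MatrixOrder in
lemma PosSemidef.exists_eq_mul_conjTranspose {n : Type*} [Fintype n] [DecidableEq n]
    {M : Matrix n n ℂ} (hM : M.PosSemidef) : ∃ T : Matrix n n ℂ, M = T * Tᴴ := by
  obtain ⟨B, hB⟩ := CStarAlgebra.nonneg_iff_eq_star_mul_self.mp hM.nonneg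
  exact ⟨Bᴴ, by simpa [star_eq_conjTranspose] using hB⟩

lemma PosSemidef.partialTraceRight [Fintype ι] [DecidableEq ι] [DecidableEq κ]
    {M : Matrix (ι × κ) (ι × κ) ℂ} (hM : M.PosSemidef) : (partialTraceRight M).PosSemidef := by
  obtain ⟨T, rfl⟩ := hM.exists_eq_mul_conjTranspose
  rw [partialTraceRight_mul_conjTranspose]
  exact posSemidef_self_mul_conjTranspose _

end Matrix

section Subadditivity

open Matrix Kronecker

variable {ι κ : Type*} [Fintype ι] [DecidableEq ι] [Fintype κ] [DecidableEq κ]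

/-- In the basis `U ⊗ 1` diagonalising the marginal, the diagonal of `ω` splits into blocks summing
to the eigenvalues of the marginal; compare each block with the uniform distribution on `κ`. -/
lemma vnEntropy_le_vnEntropy_partialTraceRight_add_log {ω : Matrix (ι × κ) (ι × κ) ℂ}
    (hω : ω.PosSemidef) (htr : ω.trace = 1) :
    vnEntropy ω ≤ vnEntropy (partialTraceRight ω) + Real.log (Fintype.card κ) := by
  have hB := hω.partialTraceRight.1
  set U : Matrix ι ι ℂ := (hB.eigenvectorUnitary : Matrix ι ι ℂ)
  set W : Matrix (ι × κ) (ι × κ) ℂ := U ⊗ₖ (1 : Matrix κ κ ℂ)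
  have hU : U * Uᴴ = 1 := mem_unitaryGroup_iff.mp hB.eigenvectorUnitary.2
  have hW : W * Wᴴ = 1 := by
    simp [W, conjTranspose_kronecker, ← mul_kronecker_mul, hU]
  set ω' := Wᴴ * ω * W
  have hω' : ω'.PosSemidef := hω.conjTranspose_mul_mul_same W
  have hdiag : partialTraceRight ω' = diagonal (fun b => (hB.eigenvalues b : ℂ)) := by
    simp only [ω', W, conjTranspose_kronecker, conjTranspose_one]
    rw [partialTraceRight_kronecker_one_mul_mul]
    simpa [U, Function.comp_def, star_eq_conjTranspose] using
      hB.conjStarAlgAut_star_eigenvectorUnitary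
  have hrow (b : ι) : ∑ k, (ω' (b, k) (b, k)).re = hB.eigenvalues b := by
    simpa [partialTraceRight] using congrArg Complex.re (congrFun (congrFun hdiag b) b)
  have hsum : ∑ b, hB.eigenvalues b = 1 := by
    have := hB.trace_eq_sum_eigenvalues
    rw [trace_partialTraceRight, htr] at this
    simpa using congrArg Complex.re this.symm
  calc vnEntropy ω = vnEntropy ω' := by
        simpa [ω'] using (vnEntropy_conj_isometry (V := Wᴴ) (by simpa using hW) hω.1).symm
    _ ≤ ∑ x, Real.negMulLog (ω' x x).re := vnEntropy_le_sum_negMulLog_diag hω'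
    _ = ∑ b, ∑ k, Real.negMulLog (ω' (b, k) (b, k)).re := Fintype.sum_prod_type _
    _ ≤ ∑ b, (Real.negMulLog (hB.eigenvalues b) +
          hB.eigenvalues b * Real.log (Fintype.card κ)) := sum_le_sum fun b _ =>
        hrow b ▸ Real.sum_negMulLog_le_negMulLog_sum_add fun k =>
          (Complex.nonneg_iff.mp hω'.diag_nonneg).1
    _ = vnEntropy (partialTraceRight ω) + Real.log (Fintype.card κ) := by
        rw [sum_add_distrib, ← sum_mul, hsum, one_mul]
        simp [vnEntropy, hB]

/-- With `ω = T Tᴴ`, the reshaped `S` has `S Sᴴ = Tr_κ ω` and `Tr_κ (Sᴴ S) = Tᴴ T`, so `Sᴴ S` plays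
the role of a purification's complementary state and the previous bound applies to it. -/
lemma vnEntropy_partialTraceRight_le_add_log {ω : Matrix (ι × κ) (ι × κ) ℂ}
    (hω : ω.PosSemidef) (htr : ω.trace = 1) :
    vnEntropy (partialTraceRight ω) ≤ vnEntropy ω + Real.log (Fintype.card κ) := by
  obtain ⟨T, rfl⟩ := hω.exists_eq_mul_conjTranspose
  set S := T.reshape
  have hS : (Sᴴ * S).trace = 1 := by
    rw [← trace_partialTraceRight, partialTraceRight_conjTranspose_reshape_mul, trace_mul_comm, htr]
  calc vnEntropy (partialTraceRight (T * Tᴴ)) = vnEntropy (S * Sᴴ) := by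
        rw [partialTraceRight_mul_conjTranspose]
    _ = vnEntropy (Sᴴ * S) :=
        vnEntropy_mul_comm (isHermitian_mul_conjTranspose_self S)
          (isHermitian_conjTranspose_mul_self S)
    _ ≤ vnEntropy (partialTraceRight (Sᴴ * S)) + Real.log (Fintype.card κ) :=
        vnEntropy_le_vnEntropy_partialTraceRight_add_log (posSemidef_conjTranspose_mul_self S) hS
    _ = vnEntropy (T * Tᴴ) + Real.log (Fintype.card κ) := by
        rw [partialTraceRight_conjTranspose_reshape_mul,
          vnEntropy_mul_comm (isHermitian_conjTranspose_mul_self T)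
            (isHermitian_mul_conjTranspose_self T)]

end Subadditivity

section Channel

open Matrix

variable {dA dB dE : ℕ}

lemma chanPhi_eq_partialTraceRight (V : Matrix (Fin dB × Fin dE) (Fin dA) ℂ)
    (ρ : Matrix (Fin dA) (Fin dA) ℂ) : chanPhi V ρ = partialTraceRight (V * ρ * Vᴴ) :=
  rfl

lemma chanPhi_sum_smul (V : Matrix (Fin dB × Fin dE) (Fin dA) ℂ) {m : ℕ} (π : Fin m → ℝ)
    (ρ : Fin m → Matrix (Fin dA) (Fin dA) ℂ) :
    chanPhi V (∑ i, π i • ρ i) = ∑ i, π i • chanPhi V (ρ i) := by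
  ext b b'
  simp only [chanPhi, ptraceE, Matrix.mul_sum, Matrix.mul_smul, Matrix.sum_mul, smul_mul,
    Matrix.sum_apply, Matrix.smul_apply, of_apply, smul_sum]
  exact Finset.sum_comm

lemma trace_conj_isometry {m n : Type*} [Fintype m] [Fintype n] [DecidableEq n]
    {W : Matrix m n ℂ} (hW : Wᴴ * W = 1) (ρ : Matrix n n ℂ) : (W * ρ * Wᴴ).trace = ρ.trace := by
  rw [trace_mul_cycle, hW, Matrix.one_mul]

lemma vnEntropy_le_vnEntropy_chanPhi_add_log {V : Matrix (Fin dB × Fin dE) (Fin dA) ℂ}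
    (hV : Vᴴ * V = 1) {ρ : Matrix (Fin dA) (Fin dA) ℂ} (hρ : ρ.PosSemidef) (htr : ρ.trace = 1) :
    vnEntropy ρ ≤ vnEntropy (chanPhi V ρ) + Real.log dE := by
  simpa [chanPhi_eq_partialTraceRight, vnEntropy_conj_isometry hV hρ.1] using
    vnEntropy_le_vnEntropy_partialTraceRight_add_log (hρ.mul_mul_conjTranspose_same V)
      ((trace_conj_isometry hV ρ).trans htr)

lemma vnEntropy_chanPhi_le_add_log {V : Matrix (Fin dB × Fin dE) (Fin dA) ℂ}
    (hV : Vᴴ * V = 1) {ρ : Matrix (Fin dA) (Fin dA) ℂ} (hρ : ρ.PosSemidef) (htr : ρ.trace = 1) :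
    vnEntropy (chanPhi V ρ) ≤ vnEntropy ρ + Real.log dE := by
  simpa [chanPhi_eq_partialTraceRight, vnEntropy_conj_isometry hV hρ.1] using
    vnEntropy_partialTraceRight_le_add_log (hρ.mul_mul_conjTranspose_same V)
      ((trace_conj_isometry hV ρ).trans htr)

end Channel

theorem entropic_disturbance_le_two_log_choi_rank_general
    (dA dB dE : ℕ)
    (V : Matrix (Fin dB × Fin dE) (Fin dA) ℂ) (hV : Vᴴ * V = 1)
    (m : ℕ) (π : Fin m → ℝ) (hπ0 : ∀ i, 0 ≤ π i) (hπ1 : ∑ i, π i = 1)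
    (ρ : Fin m → Matrix (Fin dA) (Fin dA) ℂ)
    (hρ : ∀ i, (ρ i).PosSemidef ∧ (ρ i).trace = 1) :
    finChi π ρ - finChi π (fun i => chanPhi V (ρ i)) ≤ 2 * Real.log dE := by
  have hρbar : (∑ i, π i • ρ i).PosSemidef :=
    Matrix.posSemidef_sum _ fun i _ => (hρ i).1.smul (hπ0 i)
  have hρbar_tr : (∑ i, π i • ρ i).trace = 1 := by
    simp only [Matrix.trace_sum, Matrix.trace_smul, (hρ _).2, Complex.real_smul, mul_one]
    exact_mod_cast hπ1
  have hout : ∑ i, π i * vnEntropy (chanPhi V (ρ i)) ≤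
      ∑ i, π i * vnEntropy (ρ i) + Real.log dE :=
    calc ∑ i, π i * vnEntropy (chanPhi V (ρ i))
        ≤ ∑ i, π i * (vnEntropy (ρ i) + Real.log dE) := Finset.sum_le_sum fun i _ =>
          mul_le_mul_of_nonneg_left (vnEntropy_chanPhi_le_add_log hV (hρ i).1 (hρ i).2) (hπ0 i)
      _ = ∑ i, π i * vnEntropy (ρ i) + Real.log dE := by
          simp [mul_add, Finset.sum_add_distrib, ← Finset.sum_mul, hπ1]
  have hin := vnEntropy_le_vnEntropy_chanPhi_add_log hV hρbar hρbar_tr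
  rw [finChi, finChi, ← chanPhi_sum_smul]
  linarith

/-- The entropic disturbance of a finite ensemble is bounded by `2 log d_E`. -/
theorem entropic_disturbance_le_two_log_choi_rank
    (dA dB dE : ℕ) (hdA : 0 < dA) (hdB : 0 < dB) (hdE : 0 < dE)
    (V : Matrix (Fin dB × Fin dE) (Fin dA) ℂ) (hV : Vᴴ * V = 1)
    (m : ℕ) (π : Fin m → ℝ) (hπ0 : ∀ i, 0 ≤ π i) (hπ1 : ∑ i, π i = 1)
    (ρ : Fin m → Matrix (Fin dA) (Fin dA) ℂ)
    (hρ : ∀ i, (ρ i).PosSemidef ∧ (ρ i).trace = 1) :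
    finChi π ρ - finChi π (fun i => chanPhi V (ρ i)) ≤ 2 * Real.log dE :=
  entropic_disturbance_le_two_log_choi_rank_general dA dB dE V hV m π hπ0 hπ1 ρ hρ
end

section
/- Let d_A, d_B, d_E be positive natural numbers and V an isometry from ℂ^{d_A} to ℂ^{d_B} ⊗ ℂ^{d_E}, with associated channel Φ(ρ) = Tr_E(V ρ Vᴴ). Then the entropic disturbance μ ↦ χ(μ) − χ(Φ(μ)) is a continuous function on the space of Borel probability measures on the set S_{d_A} of states on ℂ^{d_A}, equipped with the topology of weak convergence; here χ(μ) = H(ρ̄(μ)) − ∫ H(ρ) μ(dρ) and χ(Φ(μ)) = H(Φ(ρ̄(μ))) − ∫ H(Φ(ρ)) μ(dρ), with ρ̄(μ) = ∫ ρ μ(dρ). -/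
open MeasureTheory ComplexOrder Matrix

noncomputable section

instance matMS {m n : Type*} : MeasurableSpace (Matrix m n ℂ) :=
  inferInstanceAs (MeasurableSpace (m → n → ℂ))

instance matBS {m n : Type*} [Countable m] [Countable n] : BorelSpace (Matrix m n ℂ) :=
  inferInstanceAs (BorelSpace (m → n → ℂ))

/-- The set of quantum states (density matrices). -/
def stateSet (n : ℕ) : Set (Matrix (Fin n) (Fin n) ℂ) :=
  {ρ | ρ.PosSemidef ∧ ρ.trace = 1}

/-- Barycenter (average state) of a generalized ensemble. -/
def barycenter {n : ℕ} (μ : ProbabilityMeasure (stateSet n)) :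
    Matrix (Fin n) (Fin n) ℂ :=
  Matrix.of fun i j => ∫ ρ : stateSet n, ρ.1 i j ∂(μ : Measure (stateSet n))

/-- Output χ-quantity of a generalized ensemble under a map `Φ`. -/
def gChiOut {n d : ℕ} (Φ : Matrix (Fin n) (Fin n) ℂ → Matrix (Fin d) (Fin d) ℂ)
    (μ : ProbabilityMeasure (stateSet n)) : ℝ :=
  vnEntropy (Φ (barycenter μ)) -
    ∫ ρ : stateSet n, vnEntropy (Φ ρ.1) ∂(μ : Measure (stateSet n))

/-- χ-quantity of a generalized ensemble. -/
def gChi {n : ℕ} (μ : ProbabilityMeasure (stateSet n)) : ℝ :=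
  vnEntropy (barycenter μ) -
    ∫ ρ : stateSet n, vnEntropy ρ.1 ∂(μ : Measure (stateSet n))

/-- The set of pure states (rank-one projections) viewed inside the state space. -/
def pureStates (n : ℕ) : Set (stateSet n) := {ρ | ρ.1 * ρ.1 = ρ.1}

end

/-!
The disturbance is `χ(μ) − χ(Φ(μ))`, and each χ-term is `S(Ψ(ρ̄(μ))) − ∫ S(Ψ(ρ)) dμ` for a
continuous map `Ψ` sending states to states (`Ψ = id` or `Ψ = Φ`). The state space is compact and
convex, so the barycenter is again a state and depends continuously on `μ` (its entries are
integrals of bounded continuous functions), while the von Neumann entropy, being the trace of the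
continuous functional calculus `ρ ↦ negMulLog(ρ)` over matrices with spectrum in `[0, 1]`, is
continuous on states. Integrals of continuous functions on a compact space are continuous in the
weak topology, which handles the averaged-entropy terms.
-/

open Set

section States

variable {ι : Type*} [Fintype ι]

lemma isClosed_setOf_posSemidef : IsClosed {ρ : Matrix ι ι ℂ | ρ.PosSemidef} := by
  simp_rw [posSemidef_iff_dotProduct_mulVec, ofPred_and, ofPred_forall]
  refine (isClosed_eq continuous_id.matrix_conjTranspose continuous_id).inter
    (isClosed_iInter fun x => isClosed_le continuous_const ?_)
  fun_prop

lemma convex_states : Convex ℝ {ρ : Matrix ι ι ℂ | ρ.PosSemidef ∧ ρ.trace = 1} := by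
  rintro ρ ⟨hρ, hρtr⟩ σ ⟨hσ, hσtr⟩ a b ha hb hab
  refine ⟨(hρ.smul ha).add (hσ.smul hb), ?_⟩
  rw [trace_add, trace_smul, trace_smul, hρtr, hσtr, ← add_smul, hab, one_smul]

variable [DecidableEq ι] {ρ : Matrix ι ι ℂ}

lemma Matrix.PosSemidef.sum_eigenvalues_eq_one (hρ : ρ.PosSemidef) (htr : ρ.trace = 1) :
    ∑ i, hρ.1.eigenvalues i = 1 := by
  have := hρ.1.trace_eq_sum_eigenvalues.symm.trans htr
  rw [← RCLike.ofReal_sum] at this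
  exact RCLike.ofReal_injective (this.trans RCLike.ofReal_one.symm)

lemma Matrix.PosSemidef.eigenvalues_mem_Icc_of_trace_eq_one (hρ : ρ.PosSemidef)
    (htr : ρ.trace = 1) (i : ι) : hρ.1.eigenvalues i ∈ Icc (0 : ℝ) 1 :=
  ⟨hρ.eigenvalues_nonneg i, hρ.sum_eigenvalues_eq_one htr ▸ Finset.single_le_sum
    (fun j _ => hρ.eigenvalues_nonneg j) (Finset.mem_univ i)⟩

lemma Matrix.PosSemidef.norm_apply_le_one_of_trace_eq_one (hρ : ρ.PosSemidef)
    (htr : ρ.trace = 1) (i j : ι) : ‖ρ i j‖ ≤ 1 := by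
  have hU := entry_norm_bound_of_unitary hρ.1.eigenvectorUnitary.2
  rw [hρ.1.spectral_theorem, Unitary.conjStarAlgAut_apply, mul_apply]
  simp_rw [mul_diagonal]
  calc _ ≤ ∑ k, hρ.1.eigenvalues k := by
        refine (norm_sum_le _ _).trans (Finset.sum_le_sum fun k _ => ?_)
        have hk := hρ.eigenvalues_nonneg k
        rw [norm_mul, norm_mul, Function.comp_apply, RCLike.norm_ofReal, abs_of_nonneg hk,
          star_apply, norm_star]
        calc _ ≤ 1 * hρ.1.eigenvalues k * 1 := by gcongr <;> exact hU _ _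
          _ = _ := by ring
    _ = 1 := hρ.sum_eigenvalues_eq_one htr

variable (ι) in
lemma isCompact_states : IsCompact {ρ : Matrix ι ι ℂ | ρ.PosSemidef ∧ ρ.trace = 1} := by
  have hclosed : IsClosed {ρ : Matrix ι ι ℂ | ρ.PosSemidef ∧ ρ.trace = 1} :=
    isClosed_setOf_posSemidef.inter (isClosed_eq continuous_id.matrix_trace continuous_const)
  refine (isCompact_univ_pi fun _ => isCompact_univ_pi fun _ =>
    isCompact_closedBall (0 : ℂ) 1).of_isClosed_subset hclosed fun ρ hρ i _ j _ => ?_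
  simpa using hρ.1.norm_apply_le_one_of_trace_eq_one hρ.2 i j

lemma Matrix.IsHermitian.vnEntropy_eq_re_trace_cfc (hρ : ρ.IsHermitian) :
    vnEntropy ρ = (cfc Real.negMulLog ρ).trace.re := by
  rw [hρ.cfc_eq, IsHermitian.cfc, Unitary.conjStarAlgAut_apply, trace_mul_cycle,
    Unitary.coe_star_mul_self, one_mul, trace_diagonal, vnEntropy, dif_pos hρ]
  simp

/- The C⋆-norm below (the L2 operator norm) induces the product topology of `Matrix ι ι ℂ`
definitionally, so continuity of `cfc` in that norm is continuity for the topology in use. -/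
open scoped Matrix.Norms.L2Operator in
variable (ι) in
lemma continuousOn_vnEntropy :
    ContinuousOn vnEntropy {ρ : Matrix ι ι ℂ | ρ.PosSemidef ∧ ρ.trace = 1} := by
  have hcfc : ContinuousOn (cfc Real.negMulLog) {ρ : Matrix ι ι ℂ | ρ.PosSemidef ∧ ρ.trace = 1} :=
    (continuousOn_cfc (Matrix ι ι ℂ) (isCompact_Icc (a := 0) (b := 1)) _).mono fun ρ hρ => by
      refine ⟨hρ.1.1, ?_⟩
      rw [hρ.1.1.spectrum_real_eq_range_eigenvalues]
      rintro _ ⟨i, rfl⟩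
      exact hρ.1.eigenvalues_mem_Icc_of_trace_eq_one hρ.2 i
  exact ((Complex.continuous_re.comp continuous_id.matrix_trace).comp_continuousOn hcfc).congr
    fun ρ hρ => hρ.1.1.vnEntropy_eq_re_trace_cfc

end States

section Channel

variable {dA dB dE : ℕ}

lemma ptraceE_eq_sum_submatrix (M : Matrix (Fin dB × Fin dE) (Fin dB × Fin dE) ℂ) :
    ptraceE M = ∑ e, M.submatrix (·, e) (·, e) := by
  ext b b'
  simp [ptraceE, Matrix.sum_apply]

lemma Matrix.PosSemidef.ptraceE {M : Matrix (Fin dB × Fin dE) (Fin dB × Fin dE) ℂ}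
    (hM : M.PosSemidef) : (ptraceE M).PosSemidef := by
  rw [ptraceE_eq_sum_submatrix]
  exact posSemidef_sum _ fun e _ => hM.submatrix _

lemma trace_ptraceE (M : Matrix (Fin dB × Fin dE) (Fin dB × Fin dE) ℂ) :
    (ptraceE M).trace = M.trace := by
  simp [trace, ptraceE, Fintype.sum_prod_type]

lemma mapsTo_chanPhi {V : Matrix (Fin dB × Fin dE) (Fin dA) ℂ} (hV : Vᴴ * V = 1) :
    MapsTo (chanPhi V) (stateSet dA) (stateSet dB) := fun ρ hρ =>
  ⟨(hρ.1.mul_mul_conjTranspose_same V).ptraceE, by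
    rw [chanPhi, trace_ptraceE, trace_mul_cycle, hV, one_mul, hρ.2]⟩

lemma continuous_chanPhi (V : Matrix (Fin dB × Fin dE) (Fin dA) ℂ) :
    Continuous (chanPhi V) := by
  unfold chanPhi ptraceE
  fun_prop

end Channel

lemma MeasureTheory.ProbabilityMeasure.continuous_integral_of_compactSpace {X 𝕜 : Type*}
    [TopologicalSpace X] [CompactSpace X] [MeasurableSpace X] [OpensMeasurableSpace X] [RCLike 𝕜]
    {f : X → 𝕜} (hf : Continuous f) : Continuous fun μ : ProbabilityMeasure X => ∫ x, f x ∂μ :=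
  continuous_iff_continuousAt.2 fun _ => (tendsto_iff_forall_integral_rclike_tendsto 𝕜).1
    Filter.tendsto_id (BoundedContinuousFunction.mkOfCompact ⟨f, hf⟩)

section Barycenter

variable {n : ℕ}

instance compactSpace_stateSet : CompactSpace (stateSet n) :=
  isCompact_iff_compactSpace.mp (isCompact_states (Fin n))

lemma integrable_stateSet_apply (μ : ProbabilityMeasure (stateSet n)) (i j : Fin n) :
    Integrable (fun ρ : stateSet n => ρ.1 i j) μ :=
  (continuous_subtype_val.matrix_elem i j).integrable_of_hasCompactSupport
    (HasCompactSupport.of_compactSpace _)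

lemma continuous_barycenter : Continuous (barycenter (n := n)) :=
  continuous_pi fun i => continuous_pi fun j =>
    ProbabilityMeasure.continuous_integral_of_compactSpace (continuous_subtype_val.matrix_elem i j)

section

attribute [local instance] Matrix.normedAddCommGroup Matrix.normedSpace

lemma barycenter_eq_integral (μ : ProbabilityMeasure (stateSet n)) :
    barycenter μ = ∫ ρ : stateSet n, ρ.1 ∂(μ : Measure (stateSet n)) := by
  ext i j
  exact ((congrFun (eval_integral (fun i => Integrable.of_eval (integrable_stateSet_apply μ i)) i)
    j).trans (eval_integral (integrable_stateSet_apply μ i) j)).symm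

lemma barycenter_mem_stateSet (μ : ProbabilityMeasure (stateSet n)) :
    barycenter μ ∈ stateSet n := by
  rw [barycenter_eq_integral]
  exact (convex_states (ι := Fin n)).integral_mem (isCompact_states (Fin n)).isClosed
    (ae_of_all _ fun ρ => ρ.2)
    (Integrable.of_eval fun i => Integrable.of_eval (integrable_stateSet_apply μ i))

end

end Barycenter

lemma continuous_gChiOut {n d : ℕ} {Φ : Matrix (Fin n) (Fin n) ℂ → Matrix (Fin d) (Fin d) ℂ}
    (hΦc : ContinuousOn Φ (stateSet n)) (hΦ : MapsTo Φ (stateSet n) (stateSet d)) :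
    Continuous (gChiOut Φ) := by
  have hSΦ : ContinuousOn (fun ρ => vnEntropy (Φ ρ)) (stateSet n) :=
    (continuousOn_vnEntropy (Fin d)).comp hΦc hΦ
  refine (hSΦ.comp_continuous continuous_barycenter barycenter_mem_stateSet).sub ?_
  exact ProbabilityMeasure.continuous_integral_of_compactSpace
    (hSΦ.comp_continuous continuous_subtype_val Subtype.prop)

-- `gChi` is `gChiOut id` by definition.
theorem continuous_entropic_disturbance_general
    (dA dB dE : ℕ)
    (V : Matrix (Fin dB × Fin dE) (Fin dA) ℂ) (hV : Vᴴ * V = 1) :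
    Continuous (fun μ : ProbabilityMeasure (stateSet dA) =>
      gChi μ - gChiOut (chanPhi V) μ) :=
  (continuous_gChiOut continuousOn_id (mapsTo_id _)).sub
    (continuous_gChiOut (continuous_chanPhi V).continuousOn (mapsTo_chanPhi hV))

/-- For a channel with finite-dimensional input/output, the entropic disturbance
`μ ↦ χ(μ) − χ(Φ(μ))` is continuous in the topology of weak convergence. -/
theorem continuous_entropic_disturbance
    (dA dB dE : ℕ) (hdA : 0 < dA) (hdB : 0 < dB) (hdE : 0 < dE)
    (V : Matrix (Fin dB × Fin dE) (Fin dA) ℂ) (hV : Vᴴ * V = 1) :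
    Continuous (fun μ : ProbabilityMeasure (stateSet dA) =>
      gChi μ - gChiOut (chanPhi V) μ) :=
  continuous_entropic_disturbance_general dA dB dE V hV
end
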